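/- arXiv:1504.07570 — 2 statements merged into one kernel-verified Lean document; each statement's English description precedes it below -/
import Mathlib

section
/- A single transmitted symbol from GF(2) cannot simultaneously satisfy two receivers i and j that are not cross neighbors: if j ∉ S_i or i ∉ S_j, then there is no function f : GF(2)^n → GF(2) such that both w_i is determined by (f(w), (w_k)_{k∈S_i}) and w_j is determined by (f(w), (w_k)_{k∈S_j}). -/
/-!
Flipping the bit `w i` leaves the side information of receiver `i` unchanged, so the
transmitted bit must flip; likewise for `j`. Flipping both `w i` and `w j` therefore leaves
`f w` unchanged, and if `j ∉ S i` it also leaves the side information of receiver `i`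
unchanged, although it changes the bit `w i` that receiver `i` must decode.
-/

open Function

theorem Set.eqOn_update_of_notMem {ι α : Type*} [DecidableEq ι] {s : Set ι} {k : ι}
    (hk : k ∉ s) (w : ι → α) (a : α) : Set.EqOn w (update w k a) s := fun _ hm =>
  (update_of_ne (ne_of_mem_of_not_mem hm hk) a w).symm

theorem eq_of_decode_of_eqOn {ι α β : Type*} {s : Finset ι} {k : ι} {f : (ι → α) → β}
    {g : β → (s → α) → α} (hg : ∀ w : ι → α, g (f w) (fun m => w m.1) = w k)
    {w w' : ι → α} (hs : Set.EqOn w w' s) (hf : f w = f w') : w k = w' k := by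
  rw [← hg w, ← hg w', hf]
  congr
  funext m
  exact hs m.2

theorem ZMod.two_eq_of_ne_of_ne {a b c : ZMod 2} : a ≠ b → b ≠ c → a = c := by
  revert a b c
  decide

/-- A single GF(2) transmission cannot simultaneously satisfy two receivers `i`
and `j` that are not cross neighbors: if `j ∉ S i` or `i ∉ S j`, then no single
function `f : GF(2)^n → GF(2)` allows receiver `i` to decode `w i` from
`f w` and its side information, and receiver `j` to decode `w j` likewise. -/
theorem single_transmission_not_crossNeighbors
    (n : ℕ) (S : Fin n → Finset (Fin n)) (i j : Fin n) (hij : i ≠ j)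
    (hi : i ∉ S i) (hj : j ∉ S j)
    (hnc : j ∉ S i ∨ i ∉ S j) :
    ¬ ∃ f : (Fin n → ZMod 2) → ZMod 2,
        (∃ gi : ZMod 2 → ({m : Fin n // m ∈ S i} → ZMod 2) → ZMod 2,
          ∀ w : Fin n → ZMod 2, gi (f w) (fun m => w m.1) = w i) ∧
        (∃ gj : ZMod 2 → ({m : Fin n // m ∈ S j} → ZMod 2) → ZMod 2,
          ∀ w : Fin n → ZMod 2, gj (f w) (fun m => w m.1) = w j) := by
  rintro ⟨f, ⟨gi, hgi⟩, ⟨gj, hgj⟩⟩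
  wlog hji : j ∉ S i generalizing i j
  · exact this j i hij.symm hj hi hnc.symm gj hgj gi hgi (hnc.resolve_left hji)
  set w₁ := update (0 : Fin n → ZMod 2) i 1
  set w₂ := update w₁ j 1
  have hw₁ : Set.EqOn 0 w₁ (S i) := Set.eqOn_update_of_notMem hi 0 1
  have hw₂ : Set.EqOn w₁ w₂ (S j) := Set.eqOn_update_of_notMem hj w₁ 1
  have hf₁ : f 0 ≠ f w₁ := fun h => by
    simpa [w₁] using eq_of_decode_of_eqOn hgi hw₁ h
  have hf₂ : f w₁ ≠ f w₂ := fun h => by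
    simpa [w₂, w₁, hij.symm] using eq_of_decode_of_eqOn hgj hw₂ h
  have hw : Set.EqOn 0 w₂ (S i) := hw₁.trans (Set.eqOn_update_of_notMem hji w₁ 1)
  simpa [w₂, w₁, hij] using
    eq_of_decode_of_eqOn hgi hw (ZMod.two_eq_of_ne_of_ne hf₁ hf₂)
end

section
/- For the 6-message unicast instance r_1(1|{2,3,4}), r_2(2|{5}), r_3(3|{1,4}), r_4(4|{1,3}), r_5(5|{2,6}), r_6(6|{4}), no valid index code of length 2 over GF(2) exists; hence the scheme using 3 transmissions is optimal. -/
/-- The 6-message unicast instance (0-based indices) with side information sets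
`S 0 = {1,2,3}`, `S 1 = {4}`, `S 2 = {0,3}`, `S 3 = {0,2}`, `S 4 = {1,5}`,
`S 5 = {3}`. -/
def exS : Fin 6 → Finset (Fin 6) :=
  ![{1, 2, 3}, {4}, {0, 3}, {0, 2}, {1, 5}, {3}]

/-!
If no receiver in a set `T` of receivers knows any of the messages indexed by `T`, then fixing
all other messages to `0` leaves each of them to decode its message from the codeword alone, so
the code restricted to messages supported on `T` is injective and `|α| ^ |T| ≤ |β|`.
For the instance at hand, receivers `1, 2, 5` form such a set, so a code needs `2 ^ 3` codewords,
while a length-2 binary code has only `2 ^ 2`.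
-/

variable {ι α β : Type*}

def IsIndexCode (S : ι → Finset ι) (f : (ι → α) → β) : Prop :=
  ∀ i, ∃ g : β → ({m // m ∈ S i} → α) → α, ∀ w, g (f w) (fun m => w m.1) = w i

namespace IsIndexCode

variable {S : ι → Finset ι} {f : (ι → α) → β}

open Classical in
noncomputable def extendByZero [Zero α] (T : Finset ι) (v : T → α) : ι → α :=
  fun j => if h : j ∈ T then v ⟨j, h⟩ else 0

theorem injective_comp_extendByZero [Zero α] (hf : IsIndexCode S f) {T : Finset ι}
    (hT : ∀ i ∈ T, Disjoint (S i) T) : Function.Injective (f ∘ extendByZero T) := by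
  intro v v' hvv'
  funext ⟨i, hi⟩
  obtain ⟨g, hg⟩ := hf i
  have side_eq_zero : ∀ u : T → α, (fun m : {m // m ∈ S i} => extendByZero T u m.1) = 0 := by
    intro u
    funext ⟨m, hm⟩
    simp [extendByZero, Finset.disjoint_left.mp (hT i hi) hm]
  have hv := hg (extendByZero T v)
  have hv' := hg (extendByZero T v')
  rw [side_eq_zero] at hv hv'
  calc v ⟨i, hi⟩ = extendByZero T v i := by simp [extendByZero, hi]
    _ = g (f (extendByZero T v)) 0 := hv.symm
    _ = g (f (extendByZero T v')) 0 := congrArg (g · 0) hvv'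
    _ = extendByZero T v' i := hv'
    _ = v' ⟨i, hi⟩ := by simp [extendByZero, hi]

theorem card_pow_le [DecidableEq ι] [Zero α] [Fintype α] [Fintype β]
    (hf : IsIndexCode S f) {T : Finset ι} (hT : ∀ i ∈ T, Disjoint (S i) T) :
    Fintype.card α ^ T.card ≤ Fintype.card β := by
  simpa using Fintype.card_le_of_injective _ (hf.injective_comp_extendByZero hT)

end IsIndexCode

/-- For this instance no valid index code of length 2 over GF(2) exists (hence the
scheme using 3 transmissions is optimal). -/
theorem six_message_example_no_length_two_code :
    ¬ ∃ f : (Fin 6 → ZMod 2) → (Fin 2 → ZMod 2),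
      ∀ i : Fin 6,
        ∃ g : (Fin 2 → ZMod 2) → ({m : Fin 6 // m ∈ exS i} → ZMod 2) → ZMod 2,
          ∀ w : Fin 6 → ZMod 2, g (f w) (fun m => w m.1) = w i := by
  rintro ⟨f, hf⟩
  have hT : ∀ i ∈ ({1, 2, 5} : Finset (Fin 6)), Disjoint (exS i) {1, 2, 5} := by
    unfold exS; decide
  have hcard := IsIndexCode.card_pow_le (S := exS) hf hT
  simp at hcard
end
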